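/- Let X be a real n×k matrix with singular value decomposition X = U D Vᵀ, where U is an n×k real matrix with UᵀU equal to the k×k identity, V is a k×k real orthogonal matrix, and D is the k×k diagonal matrix with diagonal entries λ₁,…,λ_k. Let y ∈ ℝⁿ, γ ∈ ℝ, and for σ₁ > 0, σ₂ > 0, β ∈ ℝᵏ define q(σ₁,σ₂,β) = σ₁^{−(k+1)} σ₂^{−n} exp( −γ (log σ₁)² − σ₂²/2 − ‖Xβ − y‖²/(2σ₂²) − ‖β‖²/(2σ₁²) ). Set w = VᵀXᵀy, a₂ᵢ = λᵢ²/(2σ₂²) + 1/(2σ₁²), a₁ᵢ = wᵢ/σ₂², a₀ = −yᵀy/(2σ₂²), and q̃(σ₁,σ₂) = σ₁^{−(k+1)} σ₂^{−n} exp( −γ (log σ₁)² − σ₂²/2 + a₀ + ∑_{i=1}^{k} a₁ᵢ²/(4 a₂ᵢ) ) · (2π)^{k/2} · ∏_{i=1}^{k} (2 a₂ᵢ)^{−1/2}. Then for all σ₁, σ₂ > 0 and every index i ∈ {1,…,k}, the Lebesgue integral ∫_{ℝᵏ} ( (Vᵀβ)ᵢ − a₁ᵢ/(2 a₂ᵢ)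 )² · q(σ₁,σ₂,β) dβ equals (2 a₂ᵢ)^{−1} · q̃(σ₁,σ₂). -/

import Mathlib

/-!
In the coordinates `z = Vᵀβ`, which preserve Lebesgue measure and `‖β‖`, the singular value
decomposition turns the exponent into `a₀ + ∑ⱼ (-a₂ⱼ zⱼ² + a₁ⱼ zⱼ)`, so the integrand is a product
of one-variable functions. Each factor is a Gaussian integral, computed by completing the square;
only the `i`-th carries the weight `(zᵢ - a₁ᵢ/(2a₂ᵢ))²`, the square of the distance to the centre
of that Gaussian, and its second moment contributes the factor `(2a₂ᵢ)⁻¹`.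
-/

open Matrix MeasureTheory Real

section Gaussian

variable {b : ℝ}

theorem exp_neg_mul_sq_add_mul_eq (hb : b ≠ 0) (c x : ℝ) :
    exp (-b * x ^ 2 + c * x) = exp (-b * (x - c / (2 * b)) ^ 2) * exp (c ^ 2 / (4 * b)) := by
  rw [← exp_add]
  congr 1
  field_simp
  ring

theorem integral_exp_neg_mul_sq_add_mul (hb : 0 < b) (c : ℝ) :
    ∫ x, exp (-b * x ^ 2 + c * x) = √(π / b) * exp (c ^ 2 / (4 * b)) := by
  simp_rw [exp_neg_mul_sq_add_mul_eq hb.ne']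
  rw [integral_mul_const, integral_sub_right_eq_self (fun x => exp (-b * x ^ 2)),
    integral_gaussian]

theorem integral_sq_mul_exp_neg_mul_sq (hb : 0 < b) :
    ∫ x, x ^ 2 * exp (-b * x ^ 2) = (2 * b)⁻¹ * √(π / b) := by
  have h_even :
      ∫ x, x ^ 2 * exp (-b * x ^ 2) = 2 * ∫ x in Set.Ioi 0, x ^ 2 * exp (-b * x ^ 2) := by
    rw [← integral_comp_abs (f := fun x => x ^ 2 * exp (-b * x ^ 2))]
    simp only [sq_abs]
  have h_gamma : ∫ x in Set.Ioi 0, x ^ 2 * exp (-b * x ^ 2)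
      = b ^ (-(2 + 1) / 2 : ℝ) * (1 / 2) * Gamma ((2 + 1) / 2) := by
    rw [← integral_rpow_mul_exp_neg_mul_rpow two_pos (by norm_num) hb]
    refine setIntegral_congr_fun measurableSet_Ioi fun x _ => ?_
    simp only [rpow_two]
  have h_three_halves : Gamma ((2 + 1) / 2) = 1 / 2 * √π := by
    rw [show (2 + 1) / 2 = 1 / 2 + (1 : ℝ) by norm_num, Gamma_add_one (by norm_num),
      Gamma_one_half_eq]
  have h_rpow : b ^ (-(2 + 1) / 2 : ℝ) = b⁻¹ * (√b)⁻¹ := by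
    rw [show (-(2 + 1) / 2 : ℝ) = -1 + -(1 / 2) by norm_num, rpow_add hb, rpow_neg_one,
      rpow_neg hb.le, ← sqrt_eq_rpow]
  have : √b ≠ 0 := by positivity
  rw [h_even, h_gamma, h_three_halves, h_rpow, sqrt_div pi_pos.le]
  field_simp

theorem integral_sq_sub_mul_exp_neg_mul_sq_add_mul (hb : 0 < b) (c : ℝ) :
    ∫ x, (x - c / (2 * b)) ^ 2 * exp (-b * x ^ 2 + c * x)
      = (2 * b)⁻¹ * (√(π / b) * exp (c ^ 2 / (4 * b))) := by
  simp_rw [exp_neg_mul_sq_add_mul_eq hb.ne', ← mul_assoc]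
  rw [integral_mul_const, integral_sub_right_eq_self (fun x => x ^ 2 * exp (-b * x ^ 2)),
    integral_sq_mul_exp_neg_mul_sq hb, mul_assoc]

end Gaussian

theorem integral_sq_sub_mul_exp_sum_neg_mul_sq_add_mul {ι : Type*} [Fintype ι] [DecidableEq ι]
    {a : ι → ℝ} (ha : ∀ j, 0 < a j) (c : ι → ℝ) (i : ι) :
    ∫ z : ι → ℝ, (z i - c i / (2 * a i)) ^ 2 * exp (∑ j, (-a j * z j ^ 2 + c j * z j))
      = (2 * a i)⁻¹ * ∏ j, (√(π / a j) * exp (c j ^ 2 / (4 * a j))) := by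
  let f : ι → ℝ → ℝ := fun j t =>
    (if j = i then (t - c i / (2 * a i)) ^ 2 else 1) * exp (-a j * t ^ 2 + c j * t)
  have h_prod (z : ι → ℝ) :
      (z i - c i / (2 * a i)) ^ 2 * exp (∑ j, (-a j * z j ^ 2 + c j * z j)) = ∏ j, f j (z j) := by
    simp only [f, Finset.prod_mul_distrib, exp_sum, Finset.prod_ite_eq', Finset.mem_univ, if_true]
  have h_factor (j : ι) : ∫ t, f j t
      = (if j = i then (2 * a i)⁻¹ else 1) * (√(π / a j) * exp (c j ^ 2 / (4 * a j))) := by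
    by_cases hj : j = i
    · subst hj
      simpa only [f, if_true] using integral_sq_sub_mul_exp_neg_mul_sq_add_mul (ha j) (c j)
    · simpa only [f, if_neg hj, one_mul] using integral_exp_neg_mul_sq_add_mul (ha j) (c j)
  simp_rw [h_prod, integral_fintype_prod_volume_eq_prod, h_factor, Finset.prod_mul_distrib,
    Finset.prod_ite_eq', Finset.mem_univ, if_true]

theorem prod_sqrt_pi_div_eq {ι : Type*} [Fintype ι] {a : ι → ℝ} (ha : ∀ j, 0 ≤ a j) :
    ∏ j, √(π / a j) = (2 * π) ^ ((Fintype.card ι : ℝ) / 2) * ∏ j, (2 * a j) ^ (-(1 / 2 : ℝ)) := by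
  have h (j : ι) : √(π / a j) = (2 * π) ^ (1 / 2 : ℝ) * (2 * a j) ^ (-(1 / 2 : ℝ)) := by
    have := ha j
    rw [← mul_div_mul_left π (a j) two_ne_zero, sqrt_eq_rpow, div_rpow (by positivity)
      (by positivity), rpow_neg (by positivity), div_eq_mul_inv]
  rw [Finset.prod_congr rfl fun j _ => h j, Finset.prod_mul_distrib, Finset.prod_const,
    Finset.card_univ, ← rpow_natCast, ← rpow_mul (by positivity), one_div_mul_eq_div]

section Orthogonal

variable {ι : Type*} [Fintype ι] [DecidableEq ι] {A : Matrix ι ι ℝ}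

theorem Matrix.measurePreserving_mulVec_of_transpose_mul_self_eq_one (hA : Aᵀ * A = 1) :
    MeasurePreserving (A *ᵥ ·) volume volume := by
  have h_det : |A.det| = 1 := by
    have h := congrArg det hA
    rw [det_mul, det_transpose, det_one] at h
    rcases mul_self_eq_one_iff.mp h with h | h <;> simp [h]
  refine ⟨(toLin' A).continuous_of_finiteDimensional.measurable, ?_⟩
  have hA_det : A.det ≠ 0 := by rw [← abs_ne_zero, h_det]; exact one_ne_zero
  rw [show (A *ᵥ ·) = toLin' A from rfl, Real.map_matrix_volume_pi_eq_smul_volume_pi hA_det,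
    abs_inv, h_det, inv_one, ENNReal.ofReal_one, one_smul]

theorem Matrix.integral_comp_mulVec_of_transpose_mul_self_eq_one {E : Type*}
    [NormedAddCommGroup E] [NormedSpace ℝ E] (hA : Aᵀ * A = 1) (g : (ι → ℝ) → E) :
    ∫ x : EuclideanSpace ℝ ι, g (A *ᵥ x) = ∫ z, g z := by
  let e : (ι → ℝ) ≃L[ℝ] (ι → ℝ) :=
    (toLin'OfInv hA (mul_eq_one_comm.mp hA)).toContinuousLinearEquiv
  have he : MeasurableEmbedding (A *ᵥ ·) := e.toHomeomorph.measurableEmbedding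
  exact ((EuclideanSpace.volume_preserving_symm_measurableEquiv_toLp ι).integral_comp'
    (fun v => g (A *ᵥ v))).trans <|
    (measurePreserving_mulVec_of_transpose_mul_self_eq_one hA).integral_comp he g

end Orthogonal

theorem Matrix.mulVec_dotProduct_mulVec_of_transpose_mul_self_eq_one {m n R : Type*}
    [Fintype m] [Fintype n] [DecidableEq n] [CommRing R] {A : Matrix m n R} (hA : Aᵀ * A = 1)
    (v w : n → R) : A *ᵥ v ⬝ᵥ A *ᵥ w = v ⬝ᵥ w := by
  rw [dotProduct_mulVec, ← vecMul_transpose, vecMul_vecMul, hA, vecMul_one]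

theorem EuclideanSpace.real_norm_sq_eq_dotProduct {ι : Type*} [Fintype ι]
    (x : EuclideanSpace ℝ ι) : ‖x‖ ^ 2 = x.ofLp ⬝ᵥ x.ofLp := by
  rw [← real_inner_self_eq_norm_sq, EuclideanSpace.inner_eq_star_dotProduct, star_trivial]

section SVD

variable {m n : Type*} [Fintype m] [Fintype n] [DecidableEq n] {X U : Matrix m n ℝ}
  {V : Matrix n n ℝ} {lam : n → ℝ}

theorem norm_sq_mulVec_sub_eq_of_svd (hU : Uᵀ * U = 1) (hV : V * Vᵀ = 1)
    (hX : X = U * diagonal lam * Vᵀ) (y : EuclideanSpace ℝ m) (β : EuclideanSpace ℝ n) :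
    ‖(EuclideanSpace.equiv m ℝ).symm (X *ᵥ β) - y‖ ^ 2
      = ∑ j, lam j ^ 2 * (Vᵀ *ᵥ β) j ^ 2 - 2 * (Vᵀ *ᵥ (Xᵀ *ᵥ y) ⬝ᵥ Vᵀ *ᵥ β) + y ⬝ᵥ y := by
  have h_sq : X *ᵥ β ⬝ᵥ X *ᵥ β = ∑ j, lam j ^ 2 * (Vᵀ *ᵥ β) j ^ 2 := by
    rw [hX, ← mulVec_mulVec, ← mulVec_mulVec,
      mulVec_dotProduct_mulVec_of_transpose_mul_self_eq_one hU]
    simp only [dotProduct, mulVec_diagonal]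
    exact Finset.sum_congr rfl fun j _ => by ring
  have h_cross : X *ᵥ β ⬝ᵥ y = Vᵀ *ᵥ (Xᵀ *ᵥ y) ⬝ᵥ Vᵀ *ᵥ β := by
    rw [mulVec_dotProduct_mulVec_of_transpose_mul_self_eq_one (A := Vᵀ) hV, dotProduct_comm,
      dotProduct_mulVec, mulVec_transpose]
  rw [norm_sub_sq_real, EuclideanSpace.real_norm_sq_eq_dotProduct,
    EuclideanSpace.real_norm_sq_eq_dotProduct, EuclideanSpace.inner_eq_star_dotProduct,
    star_trivial, dotProduct_comm y.ofLp]
  simp only [EuclideanSpace.equiv, ← h_sq, ← h_cross]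
  rfl

theorem norm_sq_eq_sum_sq_transpose_mulVec (hV : V * Vᵀ = 1) (β : EuclideanSpace ℝ n) :
    ‖β‖ ^ 2 = ∑ j, (Vᵀ *ᵥ β) j ^ 2 := by
  rw [EuclideanSpace.real_norm_sq_eq_dotProduct,
    ← mulVec_dotProduct_mulVec_of_transpose_mul_self_eq_one (A := Vᵀ) hV]
  simp only [dotProduct, sq]

theorem neg_div_sub_div_eq_sum_of_svd (hU : Uᵀ * U = 1) (hV : V * Vᵀ = 1)
    (hX : X = U * diagonal lam * Vᵀ) (y : EuclideanSpace ℝ m) (β : EuclideanSpace ℝ n)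
    {s t : ℝ} (hs : s ≠ 0) (ht : t ≠ 0) :
    -(‖(EuclideanSpace.equiv m ℝ).symm (X *ᵥ β) - y‖ ^ 2 / (2 * s)) - ‖β‖ ^ 2 / (2 * t)
      = -(y ⬝ᵥ y) / (2 * s) + ∑ j, (-(lam j ^ 2 / (2 * s) + 1 / (2 * t)) * (Vᵀ *ᵥ β) j ^ 2
          + (Vᵀ *ᵥ (Xᵀ *ᵥ y)) j / s * (Vᵀ *ᵥ β) j) := by
  have h_term (j : n) :
      -(lam j ^ 2 / (2 * s) + 1 / (2 * t)) * (Vᵀ *ᵥ β) j ^ 2 + (Vᵀ *ᵥ (Xᵀ *ᵥ y)) j / s * (Vᵀ *ᵥ β) j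
        = -(lam j ^ 2 * (Vᵀ *ᵥ β) j ^ 2) / (2 * s) - (Vᵀ *ᵥ β) j ^ 2 / (2 * t)
          + 2 * ((Vᵀ *ᵥ (Xᵀ *ᵥ y)) j * (Vᵀ *ᵥ β) j) / (2 * s) := by
    field_simp
    ring
  rw [norm_sq_mulVec_sub_eq_of_svd hU hV hX, norm_sq_eq_sum_sq_transpose_mulVec hV]
  simp only [h_term, Finset.sum_add_distrib, Finset.sum_sub_distrib, ← Finset.sum_div,
    Finset.sum_neg_distrib, ← Finset.mul_sum, dotProduct]
  ring

end SVD

theorem stmt7_general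
    (n k : ℕ)
    (X U : Matrix (Fin n) (Fin k) ℝ)
    (V : Matrix (Fin k) (Fin k) ℝ)
    (lam : Fin k → ℝ)
    (hU : Uᵀ * U = 1)
    (hV₂ : V * Vᵀ = 1)
    (hX : X = U * Matrix.diagonal lam * Vᵀ)
    (y : EuclideanSpace ℝ (Fin n)) (γ : ℝ)
    (σ₁ σ₂ : ℝ) (hσ₁ : 0 < σ₁) (hσ₂ : 0 < σ₂)
    (w : Fin k → ℝ)
    (hw : w = Vᵀ.mulVec (Xᵀ.mulVec y))
    (a₂ a₁ : Fin k → ℝ) (a₀ : ℝ)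
    (ha₂ : ∀ i, a₂ i = lam i ^ 2 / (2 * σ₂ ^ 2) + 1 / (2 * σ₁ ^ 2))
    (ha₁ : ∀ i, a₁ i = w i / σ₂ ^ 2)
    (ha₀ : a₀ = -(y ⬝ᵥ y) / (2 * σ₂ ^ 2))
    (i : Fin k) :
    (∫ β : EuclideanSpace ℝ (Fin k),
        (Vᵀ.mulVec β i - a₁ i / (2 * a₂ i)) ^ 2 *
          (σ₁ ^ (-((k : ℤ) + 1)) * σ₂ ^ (-(n : ℤ)) *
            Real.exp (-γ * Real.log σ₁ ^ 2 - σ₂ ^ 2 / 2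
              - ‖(EuclideanSpace.equiv (Fin n) ℝ).symm (X.mulVec β) - y‖ ^ 2 / (2 * σ₂ ^ 2)
              - ‖β‖ ^ 2 / (2 * σ₁ ^ 2))))
      = (2 * a₂ i)⁻¹ *
          (σ₁ ^ (-((k : ℤ) + 1)) * σ₂ ^ (-(n : ℤ)) *
            Real.exp (-γ * Real.log σ₁ ^ 2 - σ₂ ^ 2 / 2 + a₀ + ∑ j, a₁ j ^ 2 / (4 * a₂ j)) *
            (2 * Real.pi) ^ ((k : ℝ) / 2) *
            ∏ j, (2 * a₂ j) ^ (-(1 / 2 : ℝ))) := by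
  have ha₂_pos (j : Fin k) : 0 < a₂ j := by rw [ha₂]; positivity
  set C := σ₁ ^ (-((k : ℤ) + 1)) * σ₂ ^ (-(n : ℤ))
  set E := -γ * log σ₁ ^ 2 - σ₂ ^ 2 / 2
  set G : (Fin k → ℝ) → ℝ := fun z =>
    (z i - a₁ i / (2 * a₂ i)) ^ 2 * exp (∑ j, (-a₂ j * z j ^ 2 + a₁ j * z j))
  have h_integrand (β : EuclideanSpace ℝ (Fin k)) :
      ((Vᵀ *ᵥ β) i - a₁ i / (2 * a₂ i)) ^ 2 * (C * exp (E
          - ‖(EuclideanSpace.equiv (Fin n) ℝ).symm (X *ᵥ β) - y‖ ^ 2 / (2 * σ₂ ^ 2)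
          - ‖β‖ ^ 2 / (2 * σ₁ ^ 2)))
        = C * exp (E + a₀) * G (Vᵀ *ᵥ β) := by
    have h := neg_div_sub_div_eq_sum_of_svd hU hV₂ hX y β (pow_ne_zero 2 hσ₂.ne')
      (pow_ne_zero 2 hσ₁.ne')
    simp only [← ha₂, ← hw, ← ha₁, ← ha₀] at h
    rw [show E - _ - _ = E + a₀ + ∑ j, (-a₂ j * (Vᵀ *ᵥ β) j ^ 2 + a₁ j * (Vᵀ *ᵥ β) j) by
      linarith, exp_add]
    simp only [G]
    ring
  calc _ = C * exp (E + a₀) * ∫ β : EuclideanSpace ℝ (Fin k), G (Vᵀ *ᵥ β) := by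
        simp_rw [h_integrand]
        exact integral_const_mul _ _
    _ = C * exp (E + a₀) * ∫ z, G z := by
        rw [integral_comp_mulVec_of_transpose_mul_self_eq_one (A := Vᵀ) hV₂]
    _ = _ := by
        rw [integral_sq_sub_mul_exp_sum_neg_mul_sq_add_mul ha₂_pos, Finset.prod_mul_distrib,
          prod_sqrt_pi_div_eq fun j => (ha₂_pos j).le, ← exp_sum, Fintype.card_fin,
          exp_add (E + a₀)]
        ring

/-- Formula 385, second central moment of `zᵢ = (Vᵀβ)ᵢ`:
`∫_{ℝᵏ} ((Vᵀβ)ᵢ − a₁ᵢ/(2a₂ᵢ))² q(σ₁,σ₂,β) dβ = (2a₂ᵢ)⁻¹ q̃(σ₁,σ₂)`. -/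
theorem stmt7
    (n k : ℕ) (hn : 0 < n) (hk : 0 < k)
    (X U : Matrix (Fin n) (Fin k) ℝ)
    (V : Matrix (Fin k) (Fin k) ℝ)
    (lam : Fin k → ℝ)
    (hU : Uᵀ * U = 1)
    (hV₁ : Vᵀ * V = 1) (hV₂ : V * Vᵀ = 1)
    (hX : X = U * Matrix.diagonal lam * Vᵀ)
    (y : EuclideanSpace ℝ (Fin n)) (γ : ℝ)
    (σ₁ σ₂ : ℝ) (hσ₁ : 0 < σ₁) (hσ₂ : 0 < σ₂)
    (w : Fin k → ℝ)
    (hw : w = Vᵀ.mulVec (Xᵀ.mulVec y))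
    (a₂ a₁ : Fin k → ℝ) (a₀ : ℝ)
    (ha₂ : ∀ i, a₂ i = lam i ^ 2 / (2 * σ₂ ^ 2) + 1 / (2 * σ₁ ^ 2))
    (ha₁ : ∀ i, a₁ i = w i / σ₂ ^ 2)
    (ha₀ : a₀ = -(y ⬝ᵥ y) / (2 * σ₂ ^ 2))
    (i : Fin k) :
    (∫ β : EuclideanSpace ℝ (Fin k),
        (Vᵀ.mulVec β i - a₁ i / (2 * a₂ i)) ^ 2 *
          (σ₁ ^ (-((k : ℤ) + 1)) * σ₂ ^ (-(n : ℤ)) *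
            Real.exp (-γ * Real.log σ₁ ^ 2 - σ₂ ^ 2 / 2
              - ‖(EuclideanSpace.equiv (Fin n) ℝ).symm (X.mulVec β) - y‖ ^ 2 / (2 * σ₂ ^ 2)
              - ‖β‖ ^ 2 / (2 * σ₁ ^ 2))))
      = (2 * a₂ i)⁻¹ *
          (σ₁ ^ (-((k : ℤ) + 1)) * σ₂ ^ (-(n : ℤ)) *
            Real.exp (-γ * Real.log σ₁ ^ 2 - σ₂ ^ 2 / 2 + a₀ + ∑ j, a₁ j ^ 2 / (4 * a₂ j)) *
            (2 * Real.pi) ^ ((k : ℝ) / 2) *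
            ∏ j, (2 * a₂ j) ^ (-(1 / 2 : ℝ))) :=
  stmt7_general n k X U V lam hU hV₂ hX y γ σ₁ σ₂ hσ₁ hσ₂ w hw a₂ a₁ a₀ ha₂ ha₁ ha₀ i
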